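/- Fix λ ∈ Λ. For all m, n ≥ 1, the independence numbers of the sender graphs are supermultiplicative: α(G_λ^{m+n}) ≥ α(G_λ^m)·α(G_λ^n). (If I_m is an independent set in G_λ^m and I_n is an independent set in G_λ^n, then the set of concatenations {x·y : x ∈ I_m, y ∈ I_n} is an independent set in G_λ^{m+n}.) -/

import Mathlib

noncomputable section

namespace IE

/-- The `n`-letter utility: `U_n(x̂, x, λ) = (1/n) ∑ᵢ U(x̂ᵢ, xᵢ, λ)`. -/
def Un {X Λ : Type*} [Fintype X] (U : X → X → Λ → ℝ) (n : ℕ)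
    (xh x : Fin n → X) (t : Λ) : ℝ :=
  (1 / (n : ℝ)) * ∑ i, U (xh i) (x i) t

/-- The `λ`-partition of a set `I ⊆ X^n`. -/
def lamPart {X Λ : Type*} [Fintype X] (U : X → X → Λ → ℝ) (n : ℕ)
    (I : Set (Fin n → X)) (t : Λ) : Set (Fin n → X) :=
  {x | x ∈ I ∧ ∀ y ∈ I, y ≠ x → Un U n x x t > Un U n y x t}

/-- The best-response set of sender type `λ` to a receiver strategy `g`. -/
def BR {X Λ : Type*} [Fintype X] (U : X → X → Λ → ℝ) (n : ℕ)
    (g : (Fin n → X) → (Fin n → X)) (t : Λ) :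
    Set ((Fin n → X) → (Fin n → X)) :=
  {s | ∀ x : Fin n → X, ∀ s' : (Fin n → X) → (Fin n → X),
    Un U n (g (s x)) x t ≥ Un U n (g (s' x)) x t}

/-- The set of perfectly recovered sequences `D(g,s)`. -/
def Drec {X : Type*} (n : ℕ) (g s : (Fin n → X) → (Fin n → X)) :
    Set (Fin n → X) :=
  {x | g (s x) = x}

/-- `min_{s ∈ B(g,λ)} |D(g,s)|`. -/
def minD {X Λ : Type*} [Fintype X] (U : X → X → Λ → ℝ) (n : ℕ)
    (g : (Fin n → X) → (Fin n → X)) (t : Λ) : ℕ :=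
  sInf ((fun s => (Drec n g s).ncard) '' BR U n g t)

/-- `D*(g) = ∑_λ P(λ) · min_{s ∈ B(g,λ)} |D(g,s)|`. -/
def Dstar {X Λ : Type*} [Fintype X] [Fintype Λ] (U : X → X → Λ → ℝ)
    (P : Λ → ℝ) (n : ℕ) (g : (Fin n → X) → (Fin n → X)) : ℝ :=
  ∑ t, P t * (minD U n g t : ℝ)

/-- The sender graph `G_λ^n` on `X^n`. -/
def senderGraph {X Λ : Type*} [Fintype X] (U : X → X → Λ → ℝ) (n : ℕ)
    (t : Λ) : SimpleGraph (Fin n → X) where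
  Adj x y := x ≠ y ∧ (Un U n x x t ≤ Un U n y x t ∨ Un U n y y t ≤ Un U n x y t)
  symm := by
    constructor
    intro x y h
    exact ⟨h.1.symm, h.2.symm⟩
  loopless := by
    constructor
    intro x h
    exact h.1 rfl

/-- The single-letter sender graph `G_λ` on `X`. -/
def senderGraph1 {X Λ : Type*} (U : X → X → Λ → ℝ) (t : Λ) :
    SimpleGraph X where
  Adj x y := x ≠ y ∧ (U x x t ≤ U y x t ∨ U y y t ≤ U x y t)
  symm := by
    constructor
    intro x y h
    exact ⟨h.1.symm, h.2.symm⟩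
  loopless := by
    constructor
    intro x h
    exact h.1 rfl

/-- A set of vertices is independent in a graph. -/
def IsIndep {V : Type*} (G : SimpleGraph V) (s : Set V) : Prop :=
  ∀ ⦃x⦄, x ∈ s → ∀ ⦃y⦄, y ∈ s → ¬ G.Adj x y

/-- The independence number `α(G)` of a graph on a finite vertex set. -/
def alpha {V : Type*} [Fintype V] (G : SimpleGraph V) : ℕ :=
  sSup {k | ∃ s : Set V, IsIndep G s ∧ s.ncard = k}

end IE

/-!
Independence in `G_λ^k` says that every member `x` of the set strictly prefers to report
itself rather than any other member `y`: `∑ᵢ U(yᵢ, xᵢ, λ) < ∑ᵢ U(xᵢ, xᵢ, λ)`. The utility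
of a concatenation is the sum of the utilities of its two halves, and a pair of
concatenations that differ in some half gains strictly in that half and weakly in the
other, so concatenations of independent sets are independent. Since concatenation is
injective, the product set has `|I_m| · |I_n|` elements.
-/

namespace IE

section SenderGraph

variable {X Λ : Type*} (U : X → X → Λ → ℝ) (t : Λ)

/-- Holds also at `k = 0`, where `1 / k = 0` and both sides are false. -/
theorem Un_lt_Un_iff [Fintype X] {k : ℕ} (x y z : Fin k → X) :
    Un U k y x t < Un U k z x t ↔ ∑ i, U (y i) (x i) t < ∑ i, U (z i) (x i) t := by
  rcases Nat.eq_zero_or_pos k with rfl | hk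
  · simp [Un]
  · exact mul_lt_mul_iff_right₀ (by positivity)

def IsSelfPreferring {k : ℕ} (I : Set (Fin k → X)) : Prop :=
  ∀ x ∈ I, ∀ y ∈ I, y ≠ x → ∑ i, U (y i) (x i) t < ∑ i, U (x i) (x i) t

theorem isIndep_senderGraph_iff [Fintype X] {k : ℕ} {I : Set (Fin k → X)} :
    IsIndep (senderGraph U k t) I ↔ IsSelfPreferring U t I := by
  simp only [IsIndep, IsSelfPreferring, senderGraph, ← Un_lt_Un_iff]
  constructor
  · intro hI x hx y hy hyx
    by_contra hle
    exact hI hx hy ⟨hyx.symm, .inl (not_lt.mp hle)⟩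
  · rintro hI x hx y hy ⟨hxy, hle | hle⟩
    · exact (hI x hx y hy hxy.symm).not_ge hle
    · exact (hI y hy x hx hxy).not_ge hle

variable {U t}

theorem IsSelfPreferring.sum_le {k : ℕ} {I : Set (Fin k → X)} (hI : IsSelfPreferring U t I)
    {x y : Fin k → X} (hx : x ∈ I) (hy : y ∈ I) :
    ∑ i, U (y i) (x i) t ≤ ∑ i, U (x i) (x i) t := by
  rcases eq_or_ne y x with rfl | hyx
  · exact le_rfl
  · exact (hI x hx y hy hyx).le

theorem sum_append_append {m n : ℕ} (a a' : Fin m → X) (b b' : Fin n → X) :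
    ∑ i, U (Fin.append a b i) (Fin.append a' b' i) t
      = ∑ i, U (a i) (a' i) t + ∑ i, U (b i) (b' i) t := by
  simp [Fin.sum_univ_add]

theorem IsSelfPreferring.image2_append {m n : ℕ} {I : Set (Fin m → X)} {J : Set (Fin n → X)}
    (hI : IsSelfPreferring U t I) (hJ : IsSelfPreferring U t J) :
    IsSelfPreferring U t (Set.image2 Fin.append I J) := by
  rintro _ ⟨a, ha, b, hb, rfl⟩ _ ⟨a', ha', b', hb', rfl⟩ hne
  rw [sum_append_append, sum_append_append]
  rcases eq_or_ne a' a with rfl | ha'a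
  · have hb'b : b' ≠ b := fun h => hne (h ▸ rfl)
    exact add_lt_add_of_le_of_lt le_rfl (hJ b hb b' hb' hb'b)
  · exact add_lt_add_of_lt_of_le (hI a ha a' ha' ha'a) (hJ.sum_le hb hb')

theorem IsIndep.image2_append_senderGraph [Fintype X] {m n : ℕ} {I : Set (Fin m → X)}
    {J : Set (Fin n → X)} (hI : IsIndep (senderGraph U m t) I)
    (hJ : IsIndep (senderGraph U n t) J) :
    IsIndep (senderGraph U (m + n) t) (Set.image2 Fin.append I J) := by
  rw [isIndep_senderGraph_iff] at hI hJ ⊢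
  exact hI.image2_append hJ

end SenderGraph

theorem ncard_image2_append {X : Type*} {m n : ℕ} (I : Set (Fin m → X)) (J : Set (Fin n → X)) :
    (Set.image2 Fin.append I J).ncard = I.ncard * J.ncard := by
  rw [← Set.ncard_prod, ← Set.image_uncurry_prod]
  exact Set.ncard_image_of_injective _ (Fin.appendEquiv m n).injective

section Alpha

variable {V : Type*} [Fintype V] (G : SimpleGraph V)

theorem bddAbove_indepCards :
    BddAbove {k | ∃ s : Set V, IsIndep G s ∧ s.ncard = k} := by
  refine ⟨Nat.card V, ?_⟩
  rintro _ ⟨s, -, rfl⟩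
  exact Set.ncard_le_card s

theorem exists_isIndep_ncard_eq_alpha : ∃ s : Set V, IsIndep G s ∧ s.ncard = alpha G :=
  Nat.sSup_mem (s := {k | ∃ s : Set V, IsIndep G s ∧ s.ncard = k})
    ⟨0, ∅, fun _ hx => hx.elim, Set.ncard_empty V⟩ (bddAbove_indepCards G)

variable {G}

theorem ncard_le_alpha {s : Set V} (hs : IsIndep G s) : s.ncard ≤ alpha G :=
  le_csSup (bddAbove_indepCards G) ⟨s, hs, rfl⟩

end Alpha

end IE

theorem stmt16_general {X Λ : Type*} [Fintype X]
    (U : X → X → Λ → ℝ) (t : Λ) (m n : ℕ) :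
    IE.alpha (IE.senderGraph U m t) * IE.alpha (IE.senderGraph U n t)
      ≤ IE.alpha (IE.senderGraph U (m + n) t) ∧
    ∀ Im : Set (Fin m → X), ∀ In : Set (Fin n → X),
      IE.IsIndep (IE.senderGraph U m t) Im →
      IE.IsIndep (IE.senderGraph U n t) In →
      IE.IsIndep (IE.senderGraph U (m + n) t)
        (Set.image2 (fun a b => Fin.append a b) Im In) := by
  refine ⟨?_, fun _ _ hI hJ => hI.image2_append_senderGraph hJ⟩
  obtain ⟨I, hI, hI_card⟩ := IE.exists_isIndep_ncard_eq_alpha (IE.senderGraph U m t)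
  obtain ⟨J, hJ, hJ_card⟩ := IE.exists_isIndep_ncard_eq_alpha (IE.senderGraph U n t)
  rw [← hI_card, ← hJ_card, ← IE.ncard_image2_append]
  exact IE.ncard_le_alpha (hI.image2_append_senderGraph hJ)

/-- the independence numbers of the sender graphs are
supermultiplicative, `α(G_λ^{m+n}) ≥ α(G_λ^m)·α(G_λ^n)`; indeed concatenations of
independent sets are independent. -/
theorem stmt16 {X Λ : Type*} [Fintype X] [Nonempty X] [Fintype Λ] [Nonempty Λ]
    (U : X → X → Λ → ℝ) (t : Λ) (m n : ℕ) (hm : 1 ≤ m) (hn : 1 ≤ n) :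
    IE.alpha (IE.senderGraph U m t) * IE.alpha (IE.senderGraph U n t)
      ≤ IE.alpha (IE.senderGraph U (m + n) t) ∧
    ∀ Im : Set (Fin m → X), ∀ In : Set (Fin n → X),
      IE.IsIndep (IE.senderGraph U m t) Im →
      IE.IsIndep (IE.senderGraph U n t) In →
      IE.IsIndep (IE.senderGraph U (m + n) t)
        (Set.image2 (fun a b => Fin.append a b) Im In) :=
  stmt16_general U t m n
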